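/- Let 0 < α < 1, ε > 0, 0 < δ ≤ T, let h > 0 be a step size such that |t^{α−1}/Γ(α) − T(t,h)| ≤ ε · t^{α−1}/Γ(α) for all t > 0, and let integers M < N satisfy: T e^{Mh} ≤ 1 − α, Γ(1−α, T e^{Mh}) ≥ (1−ε) Γ(1−α), δ e^{(N−1)h} ≥ 1 − α, and Γ(1−α, δ e^{(N−1)h}) ≤ ε Γ(1−α). Then for all t with δ ≤ t ≤ T, |t^{α−1}/Γ(α) − T_M^N(t,h)| ≤ 3ε · t^{α−1}/Γ(α), where T_M^N(t,h) = h (sin(πα)/π) Σ_{i=M}^{N−1} e^{(1−α)ih} e^{−e^{ih} t}. -/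

import Mathlib

open MeasureTheory Real Set

/-- The upper incomplete Gamma function `Γ(s, x) = ∫_x^∞ e^{-σ} σ^{s-1} dσ`. -/
noncomputable def upperGamma (s x : ℝ) : ℝ :=
  ∫ σ in Set.Ioi x, Real.exp (-σ) * σ ^ (s - 1)

/-! The summand of `T(t, h)` is `h · sin(πα)/π · f(ih)` with `f = kernelIntegrand α t`,
`f(x) = exp((1 - α)x - eˣt)`, and the substitution `σ = t eˣ` turns `∫_a^b f` into
`t^(α-1) ∫_{teᵃ}^{teᵇ} e^(-σ) σ^(-α) dσ`. Since `f` increases while `teˣ ≤ 1 - α` and decreases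
afterwards, the dropped terms with `i < M` are at most `∫_{-∞}^{Mh} f ≤ t^(α-1) (Γ(1-α) -
Γ(1-α, te^{Mh})) ≤ ε t^(α-1) Γ(1-α)`, and those with `i ≥ N` at most
`∫_{(N-1)h}^∞ f = t^(α-1) Γ(1-α, te^{(N-1)h}) ≤ ε t^(α-1) Γ(1-α)`. By the reflection formula
`sin(πα)/π · Γ(1-α) = 1/Γ(α)` each tail costs `ε t^(α-1)/Γ(α)`, on top of the error `ε` of the
untruncated sum. -/

open intervalIntegral

section SumIntegral

variable {f : ℝ → ℝ} {h : ℝ}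

theorem mul_le_integral_of_monotoneOn {a b : ℝ} (hab : a ≤ b) (hf : MonotoneOn f (Icc a b)) :
    (b - a) * f a ≤ ∫ x in a..b, f x := by
  have hint : IntervalIntegrable f volume a b := (uIcc_of_le hab ▸ hf).intervalIntegrable
  calc (b - a) * f a = ∫ _ in a..b, f a := by simp
    _ ≤ ∫ x in a..b, f x := integral_mono_on hab intervalIntegrable_const hint
          fun x hx => hf ⟨le_rfl, hab⟩ hx hx.1

theorem mul_le_integral_of_antitoneOn {a b : ℝ} (hab : a ≤ b) (hf : AntitoneOn f (Icc a b)) :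
    (b - a) * f b ≤ ∫ x in a..b, f x := by
  have hint : IntervalIntegrable f volume a b := (uIcc_of_le hab ▸ hf).intervalIntegrable
  calc (b - a) * f b = ∫ _ in a..b, f b := by simp
    _ ≤ ∫ x in a..b, f x := integral_mono_on hab intervalIntegrable_const hint
          fun x hx => hf hx ⟨hab, le_rfl⟩ hx.2

theorem sum_Ico_mul_le_integral_of_monotoneOn (hh : 0 ≤ h) {m M : ℤ} (hmM : m ≤ M)
    (hf : MonotoneOn f (Icc (m * h) (M * h))) :
    ∑ i ∈ Finset.Ico m M, h * f (i * h) ≤ ∫ x in m * h..M * h, f x := by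
  induction M, hmM using Int.leInduction with
  | base => simp
  | succ M hmM ih =>
    rw [← Finset.insert_Ico_right_eq_Ico_add_one hmM, Finset.sum_insert (by simp)]
    push_cast at hf ⊢
    have hm : (m : ℝ) * h ≤ M * h := by gcongr
    have hM : (M : ℝ) * h ≤ (M + 1) * h := by gcongr; linarith
    have hleft := hf.mono (Icc_subset_Icc_right hM)
    have hright := hf.mono (Icc_subset_Icc_left hm)
    rw [← integral_add_adjacent_intervals (uIcc_of_le hm ▸ hleft).intervalIntegrable
      (uIcc_of_le hM ▸ hright).intervalIntegrable]
    have hcell := mul_le_integral_of_monotoneOn hM hright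
    linarith [ih hleft]

theorem sum_Ioc_mul_le_integral_of_antitoneOn (hh : 0 ≤ h) {m M : ℤ} (hmM : m ≤ M)
    (hf : AntitoneOn f (Icc (m * h) (M * h))) :
    ∑ i ∈ Finset.Ioc m M, h * f (i * h) ≤ ∫ x in m * h..M * h, f x := by
  induction M, hmM using Int.leInduction with
  | base => simp
  | succ M hmM ih =>
    rw [← Finset.insert_Ioc_right_eq_Ioc_add_one hmM, Finset.sum_insert (by simp)]
    push_cast at hf ⊢
    have hm : (m : ℝ) * h ≤ M * h := by gcongr
    have hM : (M : ℝ) * h ≤ (M + 1) * h := by gcongr; linarith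
    have hleft := hf.mono (Icc_subset_Icc_right hM)
    have hright := hf.mono (Icc_subset_Icc_left hm)
    rw [← integral_add_adjacent_intervals (uIcc_of_le hm ▸ hleft).intervalIntegrable
      (uIcc_of_le hM ▸ hright).intervalIntegrable]
    have hcell := mul_le_integral_of_antitoneOn hM hright
    linarith [ih hleft]

end SumIntegral

theorem abs_tsum_sub_sum_le_of_forall_disjoint {ι : Type*} {g : ι → ℝ} (hg : 0 ≤ g)
    (s : Finset ι) {B : ℝ} (hB : ∀ u : Finset ι, Disjoint u s → ∑ i ∈ u, g i ≤ B) :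
    |∑' i, g i - ∑ i ∈ s, g i| ≤ B := by
  classical
  have hbound (u : Finset ι) : ∑ i ∈ u, g i ≤ ∑ i ∈ s, g i + B := calc
    ∑ i ∈ u, g i ≤ ∑ i ∈ u ∪ s, g i :=
      Finset.sum_le_sum_of_subset_of_nonneg Finset.subset_union_left fun i _ _ => hg i
    _ = ∑ i ∈ (u ∪ s) \ s, g i + ∑ i ∈ s, g i := (Finset.sum_sdiff Finset.subset_union_right).symm
    _ ≤ ∑ i ∈ s, g i + B := by linarith [hB ((u ∪ s) \ s) Finset.sdiff_disjoint]
  have hsum : Summable g := summable_of_sum_le hg hbound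
  have hB0 : 0 ≤ B := by simpa using hB ∅ (Finset.disjoint_empty_left s)
  rw [abs_le]
  constructor
  · linarith [hsum.sum_le_tsum s fun i _ => hg i]
  · linarith [hsum.tsum_le_of_sum_le hbound]

section UpperGamma

variable {s : ℝ}

theorem integral_Ioc_add_upperGamma (hs : 0 < s) {b : ℝ} (hb : 0 ≤ b) :
    (∫ σ in Ioc 0 b, exp (-σ) * σ ^ (s - 1)) + upperGamma s b = Gamma s := by
  rw [Gamma_eq_integral hs, ← Ioc_union_Ioi_eq_Ioi hb, upperGamma]
  have hint := Ioc_union_Ioi_eq_Ioi hb ▸ GammaIntegral_convergent hs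
  exact (setIntegral_union (Ioc_disjoint_Ioi le_rfl) measurableSet_Ioi
    (hint.mono_set subset_union_left) (hint.mono_set subset_union_right)).symm

theorem setIntegral_gammaIntegrand_mono (hs : 0 < s) {A B : Set ℝ} (hAB : A ⊆ B)
    (hB : B ⊆ Ioi 0) (hBm : MeasurableSet B) :
    ∫ σ in A, exp (-σ) * σ ^ (s - 1) ≤ ∫ σ in B, exp (-σ) * σ ^ (s - 1) :=
  setIntegral_mono_set ((GammaIntegral_convergent hs).mono_set hB)
    ((ae_restrict_mem hBm).mono fun _ hσ => mul_nonneg (exp_pos _).le (rpow_nonneg (hB hσ).le _))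
    hAB.eventuallyLE

theorem upperGamma_antitoneOn (hs : 0 < s) : AntitoneOn (upperGamma s) (Ici 0) :=
  fun _ ha _ _ hab =>
    setIntegral_gammaIntegrand_mono hs (Ioi_subset_Ioi hab) (Ioi_subset_Ioi ha) measurableSet_Ioi

theorem intervalIntegral_le_Gamma_sub_upperGamma (hs : 0 < s) {a b : ℝ} (ha : 0 ≤ a)
    (hab : a ≤ b) :
    ∫ σ in a..b, exp (-σ) * σ ^ (s - 1) ≤ Gamma s - upperGamma s b := by
  rw [integral_of_le hab, ← integral_Ioc_add_upperGamma hs (ha.trans hab), add_sub_cancel_right]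
  exact setIntegral_gammaIntegrand_mono hs (Ioc_subset_Ioc_left ha) Ioc_subset_Ioi_self
    measurableSet_Ioc

theorem intervalIntegral_le_upperGamma (hs : 0 < s) {a b : ℝ} (ha : 0 ≤ a) (hab : a ≤ b) :
    ∫ σ in a..b, exp (-σ) * σ ^ (s - 1) ≤ upperGamma s a := by
  rw [integral_of_le hab]
  exact setIntegral_gammaIntegrand_mono hs Ioc_subset_Ioi_self (Ioi_subset_Ioi ha)
    measurableSet_Ioi

end UpperGamma

theorem sin_div_pi_mul_Gamma_one_sub {α : ℝ} (hsin : sin (π * α) ≠ 0) :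
    sin (π * α) / π * Gamma (1 - α) = (Gamma α)⁻¹ := by
  have hrefl := Gamma_mul_Gamma_one_sub α
  have hΓ : Gamma α ≠ 0 := by
    rintro h0
    rw [h0, zero_mul, eq_comm, div_eq_zero_iff] at hrefl
    exact hrefl.elim pi_ne_zero hsin
  rw [eq_div_iff hsin] at hrefl
  field_simp
  linear_combination hrefl

section KernelIntegrand

noncomputable def kernelIntegrand (α t x : ℝ) : ℝ := exp ((1 - α) * x - exp x * t)

variable {α t : ℝ}

theorem exp_mul_exp_eq_kernelIntegrand (α t x : ℝ) :
    exp ((1 - α) * x) * exp (-exp x * t) = kernelIntegrand α t x := by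
  rw [kernelIntegrand, ← exp_add, neg_mul, ← sub_eq_add_neg]

theorem kernelIntegrand_eq (ht : 0 < t) (x : ℝ) :
    kernelIntegrand α t x =
      t ^ (α - 1) * (exp (-(t * exp x)) * (t * exp x) ^ ((1 - α) - 1) * (t * exp x)) := by
  have hu : 0 < t * exp x := mul_pos ht (exp_pos x)
  rw [mul_assoc (exp _), ← rpow_add_one hu.ne', sub_add_cancel, mul_rpow ht.le (exp_pos x).le,
    ← exp_mul]
  calc kernelIntegrand α t x = (t ^ (α - 1) * t ^ (1 - α)) * exp (-(t * exp x) + x * (1 - α)) := by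
        rw [← rpow_add ht, sub_add_sub_cancel, sub_self, rpow_zero, one_mul, kernelIntegrand]
        ring_nf
    _ = _ := by rw [exp_add]; ring

theorem integral_kernelIntegrand (ht : 0 < t) (a b : ℝ) :
    ∫ x in a..b, kernelIntegrand α t x =
      t ^ (α - 1) * ∫ σ in t * exp a..t * exp b, exp (-σ) * σ ^ ((1 - α) - 1) := by
  simp_rw [kernelIntegrand_eq ht, intervalIntegral.integral_const_mul]
  congr 1
  refine integral_comp_mul_deriv' (f := fun x => t * exp x)
    (g := fun σ => exp (-σ) * σ ^ ((1 - α) - 1)) (fun x _ => (hasDerivAt_exp x).const_mul t)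
    (by fun_prop) ?_
  rintro _ ⟨x, -, rfl⟩
  exact ((continuous_exp.comp continuous_neg).continuousAt.mul
    (continuousAt_rpow_const _ _ (Or.inl (mul_pos ht (exp_pos x)).ne'))).continuousWithinAt

theorem kernelIntegrand_monotoneOn (ht : 0 < t) {X : ℝ} (hX : t * exp X ≤ 1 - α) :
    MonotoneOn (kernelIntegrand α t) (Iic X) := by
  intro x _ y hy hxy
  have hexp : exp y * (x - y + 1) ≤ exp x := by
    simpa [← exp_add] using mul_le_mul_of_nonneg_left (add_one_le_exp (x - y)) (exp_pos y).le
  have hy' : t * exp y ≤ 1 - α := (mul_le_mul_of_nonneg_left (exp_le_exp.2 hy) ht.le).trans hX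
  refine exp_le_exp.2 ?_
  nlinarith [mul_le_mul_of_nonneg_left hexp ht.le,
    mul_le_mul_of_nonneg_right hy' (sub_nonneg.2 hxy)]

theorem kernelIntegrand_antitoneOn (ht : 0 < t) {X : ℝ} (hX : 1 - α ≤ t * exp X) :
    AntitoneOn (kernelIntegrand α t) (Ici X) := by
  intro x hx y _ hxy
  have hexp : exp x * (y - x + 1) ≤ exp y := by
    simpa [← exp_add] using mul_le_mul_of_nonneg_left (add_one_le_exp (y - x)) (exp_pos x).le
  have hx' : 1 - α ≤ t * exp x := hX.trans (mul_le_mul_of_nonneg_left (exp_le_exp.2 hx) ht.le)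
  refine exp_le_exp.2 ?_
  nlinarith [mul_le_mul_of_nonneg_left hexp ht.le,
    mul_le_mul_of_nonneg_right hx' (sub_nonneg.2 hxy)]

end KernelIntegrand

section Tails

variable {α t h : ℝ}

theorem sum_mul_kernelIntegrand_le_of_lt (hα : α < 1) (ht : 0 < t) (hh : 0 ≤ h) {M : ℤ}
    (hM : t * exp (M * h) ≤ 1 - α) {s : Finset ℤ} (hs : ∀ i ∈ s, i < M) :
    ∑ i ∈ s, h * kernelIntegrand α t (i * h) ≤
      t ^ (α - 1) * (Gamma (1 - α) - upperGamma (1 - α) (t * exp (M * h))) := by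
  obtain ⟨m, hm⟩ := s.bddBelow
  have hsub : s ⊆ Finset.Ico (min m M) M := fun i hi =>
    Finset.mem_Ico.2 ⟨(min_le_left m M).trans (hm hi), hs i hi⟩
  have hmM : ((min m M : ℤ) : ℝ) * h ≤ M * h := by gcongr; exact_mod_cast min_le_right m M
  calc ∑ i ∈ s, h * kernelIntegrand α t (i * h)
      ≤ ∑ i ∈ Finset.Ico (min m M) M, h * kernelIntegrand α t (i * h) :=
        Finset.sum_le_sum_of_subset_of_nonneg hsub fun _ _ _ => mul_nonneg hh (exp_pos _).le
    _ ≤ ∫ x in (min m M : ℤ) * h..M * h, kernelIntegrand α t x :=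
        sum_Ico_mul_le_integral_of_monotoneOn hh (min_le_right m M)
          ((kernelIntegrand_monotoneOn ht hM).mono Icc_subset_Iic_self)
    _ ≤ _ := by
        rw [integral_kernelIntegrand ht]
        gcongr
        exact intervalIntegral_le_Gamma_sub_upperGamma (by linarith) (by positivity)
          (by gcongr)

theorem sum_mul_kernelIntegrand_le_of_le (hα : α < 1) (ht : 0 < t) (hh : 0 ≤ h) {N : ℤ}
    (hN : 1 - α ≤ t * exp ((N - 1) * h)) {s : Finset ℤ} (hs : ∀ i ∈ s, N ≤ i) :
    ∑ i ∈ s, h * kernelIntegrand α t (i * h) ≤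
      t ^ (α - 1) * upperGamma (1 - α) (t * exp ((N - 1) * h)) := by
  obtain ⟨n, hn⟩ := s.bddAbove
  have hsub : s ⊆ Finset.Ioc (N - 1) (max n (N - 1)) := fun i hi =>
    Finset.mem_Ioc.2 ⟨by linarith [hs i hi], (hn hi).trans (le_max_left n _)⟩
  have hcast : ((N - 1 : ℤ) : ℝ) = N - 1 := by push_cast; ring
  have hNn : ((N : ℝ) - 1) * h ≤ (max n (N - 1) : ℤ) * h := by
    gcongr; rw [← hcast]; exact_mod_cast le_max_right n (N - 1)
  calc ∑ i ∈ s, h * kernelIntegrand α t (i * h)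
      ≤ ∑ i ∈ Finset.Ioc (N - 1) (max n (N - 1)), h * kernelIntegrand α t (i * h) :=
        Finset.sum_le_sum_of_subset_of_nonneg hsub fun _ _ _ => mul_nonneg hh (exp_pos _).le
    _ ≤ ∫ x in (N - 1 : ℤ) * h..(max n (N - 1) : ℤ) * h, kernelIntegrand α t x :=
        sum_Ioc_mul_le_integral_of_antitoneOn hh (le_max_right n _)
          ((kernelIntegrand_antitoneOn ht (hcast ▸ hN)).mono Icc_subset_Ici_self)
    _ ≤ _ := by
        rw [hcast, integral_kernelIntegrand ht]
        gcongr
        exact intervalIntegral_le_upperGamma (by linarith) (by positivity) (by gcongr)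

theorem sum_mul_kernelIntegrand_le_of_disjoint (hα : α < 1) (ht : 0 < t) (hh : 0 ≤ h)
    {M N : ℤ} (hM : t * exp (M * h) ≤ 1 - α) (hN : 1 - α ≤ t * exp ((N - 1) * h))
    {u : Finset ℤ} (hu : Disjoint u (Finset.Icc M (N - 1))) :
    ∑ i ∈ u, h * kernelIntegrand α t (i * h) ≤
      t ^ (α - 1) * ((Gamma (1 - α) - upperGamma (1 - α) (t * exp (M * h))) +
        upperGamma (1 - α) (t * exp ((N - 1) * h))) := by
  rw [← Finset.sum_filter_add_sum_filter_not u (· < M), mul_add]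
  refine add_le_add (sum_mul_kernelIntegrand_le_of_lt hα ht hh hM fun i hi => ?_)
    (sum_mul_kernelIntegrand_le_of_le hα ht hh hN fun i hi => ?_)
  · exact (Finset.mem_filter.1 hi).2
  · obtain ⟨hiu, hiM⟩ := Finset.mem_filter.1 hi
    have := Finset.disjoint_left.1 hu hiu
    rw [Finset.mem_Icc] at this
    omega

theorem abs_tsum_sub_sum_kernelIntegrand_le {α ε δ T h t : ℝ} {M N : ℤ} (hα : α < 1)
    (hδ : 0 < δ) (hh : 0 ≤ h) (hδt : δ ≤ t) (htT : t ≤ T)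
    (hM1 : T * exp (M * h) ≤ 1 - α)
    (hM2 : (1 - ε) * Gamma (1 - α) ≤ upperGamma (1 - α) (T * exp (M * h)))
    (hN1 : 1 - α ≤ δ * exp ((N - 1) * h))
    (hN2 : upperGamma (1 - α) (δ * exp ((N - 1) * h)) ≤ ε * Gamma (1 - α)) :
    h * |∑' i : ℤ, kernelIntegrand α t (i * h) - ∑ i ∈ Finset.Icc M (N - 1),
      kernelIntegrand α t (i * h)| ≤ t ^ (α - 1) * (2 * ε * Gamma (1 - α)) := by
  have ht : 0 < t := hδ.trans_le hδt
  have hs : 0 < 1 - α := by linarith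
  have hM : t * exp (M * h) ≤ 1 - α := (mul_le_mul_of_nonneg_right htT (exp_pos _).le).trans hM1
  have hN : 1 - α ≤ t * exp ((N - 1) * h) :=
    hN1.trans (mul_le_mul_of_nonneg_right hδt (exp_pos _).le)
  have hMΓ : Gamma (1 - α) - upperGamma (1 - α) (t * exp (M * h)) ≤ ε * Gamma (1 - α) := by
    have := upperGamma_antitoneOn hs (mul_pos ht (exp_pos ((M : ℝ) * h))).le
      (mul_pos (ht.trans_le htT) (exp_pos _)).le (by gcongr)
    linarith
  have hNΓ : upperGamma (1 - α) (t * exp ((N - 1) * h)) ≤ ε * Gamma (1 - α) :=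
    (upperGamma_antitoneOn hs (mul_pos hδ (exp_pos _)).le (mul_pos ht (exp_pos _)).le
      (by gcongr)).trans hN2
  have htails := abs_tsum_sub_sum_le_of_forall_disjoint
    (g := fun i : ℤ => h * kernelIntegrand α t (i * h)) (fun _ => mul_nonneg hh (exp_pos _).le)
    (Finset.Icc M (N - 1)) fun u hu => sum_mul_kernelIntegrand_le_of_disjoint hα ht hh hM hN hu
  rw [tsum_mul_left, ← Finset.mul_sum, ← mul_sub, abs_mul, abs_of_nonneg hh] at htails
  exact htails.trans (by gcongr; linarith)

end Tails

theorem truncated_kernel_approximation_error_general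
    (α ε δ T h : ℝ) (M N : ℤ)
    (hα0 : 0 < α) (hα1 : α < 1) (hδ : 0 < δ) (hh : 0 < h)
    (htrap : ∀ t > (0:ℝ),
      |t ^ (α - 1) / Real.Gamma α -
          h * (Real.sin (Real.pi * α) / Real.pi) *
            ∑' i : ℤ, Real.exp ((1 - α) * ((i : ℝ) * h)) * Real.exp (-Real.exp ((i : ℝ) * h) * t)|
        ≤ ε * (t ^ (α - 1) / Real.Gamma α))
    (hM1 : T * Real.exp ((M : ℝ) * h) ≤ 1 - α)
    (hM2 : (1 - ε) * Real.Gamma (1 - α) ≤ upperGamma (1 - α) (T * Real.exp ((M : ℝ) * h)))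
    (hN1 : 1 - α ≤ δ * Real.exp (((N : ℝ) - 1) * h))
    (hN2 : upperGamma (1 - α) (δ * Real.exp (((N : ℝ) - 1) * h)) ≤ ε * Real.Gamma (1 - α)) :
    ∀ t, δ ≤ t → t ≤ T →
      |t ^ (α - 1) / Real.Gamma α -
          h * (Real.sin (Real.pi * α) / Real.pi) *
            ∑ i ∈ Finset.Icc M (N - 1),
              Real.exp ((1 - α) * ((i : ℝ) * h)) * Real.exp (-Real.exp ((i : ℝ) * h) * t)|
        ≤ 3 * ε * (t ^ (α - 1) / Real.Gamma α) := by
  intro t hδt htT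
  have ht : 0 < t := hδ.trans_le hδt
  have hsin : 0 < sin (π * α) :=
    sin_pos_of_pos_of_lt_pi (mul_pos pi_pos hα0) (by nlinarith [pi_pos])
  have htails := abs_tsum_sub_sum_kernelIntegrand_le hα1 hδ hh.le hδt htT hM1 hM2 hN1 hN2
  have htrap_t := htrap t ht
  simp only [exp_mul_exp_eq_kernelIntegrand] at htrap_t ⊢
  set S := ∑' i : ℤ, kernelIntegrand α t (i * h)
  set F := ∑ i ∈ Finset.Icc M (N - 1), kernelIntegrand α t (i * h)
  set c := sin (π * α) / π
  have hc : 0 ≤ c := by positivity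
  calc |t ^ (α - 1) / Gamma α - h * c * F|
      = |(t ^ (α - 1) / Gamma α - h * c * S) + c * (h * (S - F))| := by ring_nf
    _ ≤ ε * (t ^ (α - 1) / Gamma α) + c * (h * |S - F|) := by
        grw [abs_add_le, abs_mul c, abs_mul h, abs_of_nonneg hc, abs_of_pos hh, htrap_t]
    _ ≤ ε * (t ^ (α - 1) / Gamma α) + c * (t ^ (α - 1) * (2 * ε * Gamma (1 - α))) := by
        gcongr
    _ = 3 * ε * (t ^ (α - 1) / Gamma α) := by
        rw [div_eq_mul_inv, ← sin_div_pi_mul_Gamma_one_sub hsin.ne']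
        ring

/-- **Total error of the truncated sum-of-exponentials approximation.** Under the step-size
condition on `h` and the truncation conditions on `M` and `N`, the truncated trapezoidal
approximation `T_M^N(t,h)` of the fractional kernel satisfies a `3ε` relative error bound
on `δ ≤ t ≤ T`. -/
theorem truncated_kernel_approximation_error
    (α ε δ T h : ℝ) (M N : ℤ)
    (hα0 : 0 < α) (hα1 : α < 1) (hε : 0 < ε) (hδ : 0 < δ) (hδT : δ ≤ T) (hh : 0 < h)
    (hMN : M < N)
    (htrap : ∀ t > (0:ℝ),
      |t ^ (α - 1) / Real.Gamma α -
          h * (Real.sin (Real.pi * α) / Real.pi) *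
            ∑' i : ℤ, Real.exp ((1 - α) * ((i : ℝ) * h)) * Real.exp (-Real.exp ((i : ℝ) * h) * t)|
        ≤ ε * (t ^ (α - 1) / Real.Gamma α))
    (hM1 : T * Real.exp ((M : ℝ) * h) ≤ 1 - α)
    (hM2 : (1 - ε) * Real.Gamma (1 - α) ≤ upperGamma (1 - α) (T * Real.exp ((M : ℝ) * h)))
    (hN1 : 1 - α ≤ δ * Real.exp (((N : ℝ) - 1) * h))
    (hN2 : upperGamma (1 - α) (δ * Real.exp (((N : ℝ) - 1) * h)) ≤ ε * Real.Gamma (1 - α)) :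
    ∀ t, δ ≤ t → t ≤ T →
      |t ^ (α - 1) / Real.Gamma α -
          h * (Real.sin (Real.pi * α) / Real.pi) *
            ∑ i ∈ Finset.Icc M (N - 1),
              Real.exp ((1 - α) * ((i : ℝ) * h)) * Real.exp (-Real.exp ((i : ℝ) * h) * t)|
        ≤ 3 * ε * (t ^ (α - 1) / Real.Gamma α) :=
  truncated_kernel_approximation_error_general α ε δ T h M N hα0 hα1 hδ hh htrap hM1 hM2 hN1 hN2
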